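/- Moyal identity: for ψ, φ, ψ', φ' in the Schwartz space on ℝⁿ, the cross-Wigner transforms satisfy ⟨W(ψ,φ), W(ψ',φ')⟩_{L²(ℝ²ⁿ)} = (2πħ)^{-n} ⟨ψ, ψ'⟩_{L²} · conj(⟨φ, φ'⟩_{L²}). In particular ‖Wψ‖_{L²(ℝ²ⁿ)} = (2πħ)^{-n/2} ‖ψ‖²_{L²(ℝⁿ)}. -/

import Mathlib

open Matrix MeasureTheory SchwartzMap
open scoped Real

/-- The cross-Wigner transform
W(ψ,φ)(x,p) = (2πħ)⁻ⁿ ∫ e^{-i p·y/ħ} ψ(x + y/2) conj(φ(x - y/2)) dy. -/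
noncomputable def Wig (n : ℕ) (hb : ℝ) (ψ φ : (Fin n → ℝ) → ℂ)
    (x p : Fin n → ℝ) : ℂ :=
  ((2 * Real.pi * hb : ℂ) ^ n)⁻¹ *
    ∫ y : Fin n → ℝ,
      Complex.exp (-(Complex.I * ((p ⬝ᵥ y : ℝ) : ℂ)) / (hb : ℂ)) *
        ψ (x + (2 : ℝ)⁻¹ • y) * (starRingEnd ℂ) (φ (x - (2 : ℝ)⁻¹ • y))

/-!
For fixed `x`, the map `p ↦ W(ψ,φ)(x,p)` is `(2πħ)⁻ⁿ` times the Fourier transform of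
`y ↦ ψ(x + y/2) conj φ(x - y/2)` evaluated at `p/(2πħ)`, so Plancherel in `p` turns the
`p`-integral into `(2πħ)⁻ⁿ ∫ (ψ conj ψ')(x + y/2) (φ' conj φ)(x - y/2) dy`. The substitution
`(x, y) ↦ (x + y/2, x - y/2)` has Jacobian one, so integrating over `x` factorises this into
`⟨ψ, ψ'⟩ conj ⟨φ, φ'⟩`; concretely, the `y`-integral is `2ⁿ (f ⋆ g)(2x)` and the integral of a
convolution is the product of the integrals. None of this depends on coordinates: it holds on
any finite-dimensional real inner product space, and `p ⬝ᵥ y` is the inner product of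
`EuclideanSpace ℝ (Fin n)`.
-/

open FourierTransform Complex Module ComplexConjugate
open scoped Convolution
open scoped InnerProductSpace

noncomputable section

namespace SchwartzMap

variable {E F : Type*} [NormedAddCommGroup E] [NormedSpace ℝ E]
  [NormedAddCommGroup F] [NormedSpace ℝ F]

lemma antilipschitzWith_const_add_smul (x : E) {c : ℝ} (hc : c ≠ 0) :
    AntilipschitzWith ‖c‖₊⁻¹ (fun y : E => x + c • y) :=
  AntilipschitzWith.of_le_mul_dist fun y z => by
    rw [dist_add_left, dist_smul₀, NNReal.coe_inv, coe_nnnorm,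
      inv_mul_cancel_left₀ (norm_ne_zero_iff.2 hc)]

def compConstAddSMulCLM (x : E) {c : ℝ} (hc : c ≠ 0) : 𝓢(E, F) →L[ℝ] 𝓢(E, F) :=
  compCLMOfAntilipschitz ℝ (by fun_prop) (antilipschitzWith_const_add_smul x hc)

@[simp] lemma compConstAddSMulCLM_apply (x : E) {c : ℝ} (hc : c ≠ 0) (f : 𝓢(E, F)) (y : E) :
    compConstAddSMulCLM x hc f y = f (x + c • y) := rfl

def mulConj (f g : 𝓢(E, ℂ)) : 𝓢(E, ℂ) :=
  pairing (ContinuousLinearMap.mul ℝ ℂ) f (postcompCLM conjCLE.toContinuousLinearMap g)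

@[simp] lemma mulConj_apply (f g : 𝓢(E, ℂ)) (x : E) : mulConj f g x = f x * conj (g x) := rfl

def wignerIntegrand (ψ φ : 𝓢(E, ℂ)) (x : E) : 𝓢(E, ℂ) :=
  mulConj (compConstAddSMulCLM x (by norm_num : (2⁻¹ : ℝ) ≠ 0) ψ)
    (compConstAddSMulCLM x (by norm_num : (-2⁻¹ : ℝ) ≠ 0) φ)

@[simp] lemma wignerIntegrand_apply (ψ φ : 𝓢(E, ℂ)) (x y : E) :
    wignerIntegrand ψ φ x y = ψ (x + (2 : ℝ)⁻¹ • y) * conj (φ (x - (2 : ℝ)⁻¹ • y)) := by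
  simp [wignerIntegrand, sub_eq_add_neg]

end SchwartzMap

section Midpoint

variable {E : Type*} [NormedAddCommGroup E] [NormedSpace ℝ E] [FiniteDimensional ℝ E]
  [MeasurableSpace E] [BorelSpace E] (μ : Measure E) [μ.IsAddHaarMeasure]

lemma integral_mul_add_sub_half_smul_eq_convolution (f g : E → ℂ) (x : E) :
    ∫ y, f (x + (2 : ℝ)⁻¹ • y) * g (x - (2 : ℝ)⁻¹ • y) ∂μ =
      (2 ^ finrank ℝ E : ℝ) • (f ⋆[ContinuousLinearMap.mul ℝ ℂ, μ] g) ((2 : ℝ) • x) := by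
  have hshift : ∫ u, f (x + u) * g (x - u) ∂μ = ∫ t, f t * g ((2 : ℝ) • x - t) ∂μ := by
    rw [← integral_sub_right_eq_self _ x]
    congr with t
    rw [add_sub_cancel, two_smul, sub_sub_eq_add_sub, add_sub_assoc]
  rw [Measure.integral_comp_inv_smul_of_nonneg μ (fun u => f (x + u) * g (x - u)) zero_le_two,
    hshift, convolution_def]
  rfl

lemma integral_integral_mul_add_sub_half_smul {f g : E → ℂ} (hf : Integrable f μ)
    (hg : Integrable g μ) :
    ∫ x, ∫ y, f (x + (2 : ℝ)⁻¹ • y) * g (x - (2 : ℝ)⁻¹ • y) ∂μ ∂μ =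
      (∫ x, f x ∂μ) * ∫ x, g x ∂μ := by
  simp_rw [integral_mul_add_sub_half_smul_eq_convolution μ f g]
  rw [integral_smul, Measure.integral_comp_smul_of_nonneg μ _ 2 (hR := zero_le_two), smul_smul,
    mul_inv_cancel₀ (by positivity), one_smul, integral_convolution _ hf hg]
  rfl

end Midpoint

section Wigner

variable {V : Type*} [NormedAddCommGroup V] [InnerProductSpace ℝ V] [FiniteDimensional ℝ V]
  [MeasurableSpace V] [BorelSpace V]

def wigner (ħ : ℝ) (ψ φ : V → ℂ) (x p : V) : ℂ :=
  ((2 * π * ħ : ℂ) ^ finrank ℝ V)⁻¹ *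
    ∫ y, exp (-(I * (⟪p, y⟫_ℝ : ℂ)) / ħ) * ψ (x + (2 : ℝ)⁻¹ • y) * conj (φ (x - (2 : ℝ)⁻¹ • y))

lemma integral_fourier_smul_mul_conj (f g : 𝓢(V, ℂ)) (c : ℝ) :
    ∫ ξ, 𝓕 f (c • ξ) * conj (𝓕 g (c • ξ)) = |(c ^ finrank ℝ V)⁻¹| • ∫ x, f x * conj (g x) := by
  rw [Measure.integral_comp_smul volume (fun ξ => 𝓕 f ξ * conj (𝓕 g ξ))]
  simpa only [RCLike.inner_apply] using congrArg (|(c ^ finrank ℝ V)⁻¹| • ·)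
    (integral_inner_fourier_fourier g f)

lemma wigner_eq_fourier (ħ : ℝ) (ψ φ : 𝓢(V, ℂ)) (x p : V) :
    wigner ħ ψ φ x p = ((2 * π * ħ : ℂ) ^ finrank ℝ V)⁻¹ *
      𝓕 (SchwartzMap.wignerIntegrand ψ φ x) ((2 * π * ħ)⁻¹ • p) := by
  rw [wigner, SchwartzMap.fourier_coe, Real.fourier_eq']
  congr 1
  refine integral_congr_ae (.of_forall fun y => ?_)
  simp only [SchwartzMap.wignerIntegrand_apply, smul_eq_mul, real_inner_smul_right,
    real_inner_comm p y, mul_assoc]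
  congr 2
  push_cast
  field_simp

lemma integral_wigner_mul_conj {ħ : ℝ} (hħ : 0 < ħ) (ψ φ ψ' φ' : 𝓢(V, ℂ)) (x : V) :
    ∫ p, wigner ħ ψ φ x p * conj (wigner ħ ψ' φ' x p) =
      ((2 * π * ħ : ℂ) ^ finrank ℝ V)⁻¹ *
        ∫ y, SchwartzMap.wignerIntegrand ψ φ x y *
          conj (SchwartzMap.wignerIntegrand ψ' φ' x y) := by
  have hc : (0 : ℝ) < 2 * π * ħ := by positivity
  have hC : ((2 * π * ħ : ℂ) ^ finrank ℝ V)⁻¹ = (((2 * π * ħ) ^ finrank ℝ V)⁻¹ : ℝ) := by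
    push_cast; rfl
  simp_rw [wigner_eq_fourier, map_mul, hC, conj_ofReal, mul_mul_mul_comm, integral_const_mul,
    integral_fourier_smul_mul_conj, inv_pow, inv_inv, abs_of_pos (pow_pos hc _), real_smul,
    ← mul_assoc]
  congr 1
  push_cast
  field_simp

theorem integral_integral_wigner_mul_conj {ħ : ℝ} (hħ : 0 < ħ) (ψ φ ψ' φ' : 𝓢(V, ℂ)) :
    ∫ x, ∫ p, wigner ħ ψ φ x p * conj (wigner ħ ψ' φ' x p) =
      ((2 * π * ħ : ℂ) ^ finrank ℝ V)⁻¹ * (∫ x, ψ x * conj (ψ' x)) *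
        conj (∫ x, φ x * conj (φ' x)) := by
  have hsplit : ∀ x y, SchwartzMap.wignerIntegrand ψ φ x y *
      conj (SchwartzMap.wignerIntegrand ψ' φ' x y) =
      SchwartzMap.mulConj ψ ψ' (x + (2 : ℝ)⁻¹ • y) *
        SchwartzMap.mulConj φ' φ (x - (2 : ℝ)⁻¹ • y) :=
    fun x y => by
      simp only [SchwartzMap.wignerIntegrand_apply, SchwartzMap.mulConj_apply, map_mul, conj_conj]
      ring
  simp_rw [integral_wigner_mul_conj hħ, hsplit]
  rw [integral_const_mul, integral_integral_mul_add_sub_half_smul volume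
    (SchwartzMap.mulConj ψ ψ').integrable (SchwartzMap.mulConj φ' φ).integrable, ← integral_conj]
  simp only [SchwartzMap.mulConj_apply, map_mul, conj_conj, mul_comm (φ _), mul_assoc]

end Wigner

section Coordinates

lemma integral_comp_ofLp {ι F : Type*} [Fintype ι] [NormedAddCommGroup F] [NormedSpace ℝ F]
    (f : (ι → ℝ) → F) : ∫ v : EuclideanSpace ℝ ι, f (WithLp.ofLp v) = ∫ x, f x :=
  (EuclideanSpace.volume_preserving_symm_measurableEquiv_toLp ι).integral_comp' f

lemma Wig_ofLp_eq_wigner (n : ℕ) (hb : ℝ) (ψ φ : (Fin n → ℝ) → ℂ)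
    (x p : EuclideanSpace ℝ (Fin n)) :
    Wig n hb ψ φ x.ofLp p.ofLp = wigner hb (ψ ∘ WithLp.ofLp) (φ ∘ WithLp.ofLp) x p := by
  rw [Wig, wigner, finrank_euclideanSpace_fin, ← integral_comp_ofLp]
  simp [EuclideanSpace.inner_eq_star_dotProduct, dotProduct_comm]

lemma integral_integral_Wig_mul_conj (n : ℕ) {hb : ℝ} (hhb : 0 < hb)
    (ψ φ ψ' φ' : 𝓢((Fin n → ℝ), ℂ)) :
    ∫ x : Fin n → ℝ, ∫ p : Fin n → ℝ, Wig n hb ψ φ x p * conj (Wig n hb ψ' φ' x p) =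
      ((2 * π * hb : ℂ) ^ n)⁻¹ * (∫ x : Fin n → ℝ, ψ x * conj (ψ' x)) *
        conj (∫ x : Fin n → ℝ, φ x * conj (φ' x)) := by
  let e := SchwartzMap.compCLMOfContinuousLinearEquiv ℝ (F := ℂ) (EuclideanSpace.equiv (Fin n) ℝ)
  have h := integral_integral_wigner_mul_conj hhb (e ψ) (e φ) (e ψ') (e φ')
  rw [finrank_euclideanSpace_fin] at h
  rw [← integral_comp_ofLp, ← integral_comp_ofLp (fun x => ψ x * conj (ψ' x)),
    ← integral_comp_ofLp (fun x => φ x * conj (φ' x))]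
  simp_rw [← integral_comp_ofLp (fun p => Wig n hb _ _ _ p * _), Wig_ofLp_eq_wigner]
  exact h

end Coordinates

/-- Moyal identity
⟨W(ψ,φ), W(ψ',φ')⟩_{L²(ℝ²ⁿ)} = (2πħ)⁻ⁿ ⟨ψ,ψ'⟩ conj ⟨φ,φ'⟩, and in particular
‖Wψ‖²_{L²} = (2πħ)⁻ⁿ ‖ψ‖⁴. -/
theorem moyal_identity (n : ℕ) (hb : ℝ) (hhb : 0 < hb)
    (ψ φ ψ' φ' : 𝓢((Fin n → ℝ), ℂ)) :
    (∫ x : Fin n → ℝ, ∫ p : Fin n → ℝ,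
        Wig n hb (⇑ψ) (⇑φ) x p * (starRingEnd ℂ) (Wig n hb (⇑ψ') (⇑φ') x p)) =
      ((2 * Real.pi * hb : ℂ) ^ n)⁻¹ *
        (∫ x : Fin n → ℝ, ψ x * (starRingEnd ℂ) (ψ' x)) *
        (starRingEnd ℂ) (∫ x : Fin n → ℝ, φ x * (starRingEnd ℂ) (φ' x)) ∧
    (∫ x : Fin n → ℝ, ∫ p : Fin n → ℝ, ‖Wig n hb (⇑ψ) (⇑ψ) x p‖ ^ 2) =
      ((2 * Real.pi * hb) ^ n)⁻¹ * (∫ x : Fin n → ℝ, ‖ψ x‖ ^ 2) ^ 2 := by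
  refine ⟨integral_integral_Wig_mul_conj n hhb ψ φ ψ' φ', ?_⟩
  have h := integral_integral_Wig_mul_conj n hhb ψ ψ ψ ψ
  simp_rw [mul_conj', ← Complex.ofReal_pow, integral_complex_ofReal, conj_ofReal] at h
  norm_cast at h
  rw [h, mul_assoc, sq]
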